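/- Let ε and X be random variables with P(ε ≤ 0 | X) = τ almost surely for τ ∈ (0,1), and let Z be another random variable with conditional distribution function F_{Z|X,ε}. Define W_{Θ,z} := (1{ε ≤ 0} − τ)·1{X ∈ Θ}·(1{Z ≤ z} − F_{Z|X,ε}(z | X, 0)). Then under the null hypothesis P(ε ≤ 0 | X, Z) = τ a.s., E[W_{Θ,z}] = 0, and Cov(W_{Θ₁,y}, W_{Θ₂,z}) = τ(1−τ) E[ 1{X ∈ Θ₁ ∩ Θ₂} · E[(1{Z ≤ y} − F_{Z|X,ε}(y|X,0))(1{Z ≤ z} − F_{Z|X,ε}(z|X,0)) | X, ε] ]. -/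

import Mathlib

open MeasureTheory Set

/-- The random variable
`W_{Θ,z} = (1{ε ≤ 0} − τ)·1{X ∈ Θ}·(1{Z ≤ z} − F_{Z|X,ε}(z|X,0))`,
where `Fc z x` stands for the conditional distribution function `F_{Z|X,ε}(z|x,0)`. -/
noncomputable def Wfun {Ωs : Type*} [MeasurableSpace Ωs] {d q : ℕ}
    (X : Ωs → Fin d → ℝ) (Z : Ωs → Fin q → ℝ) (e : Ωs → ℝ) (τ : ℝ)
    (Fc : (Fin q → ℝ) → (Fin d → ℝ) → ℝ)
    (Θ : Set (Fin d → ℝ)) (z : Fin q → ℝ) (ω : Ωs) : ℝ :=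
  ({ω' | e ω' ≤ 0}.indicator (fun _ => (1:ℝ)) ω - τ) *
    ((X ⁻¹' Θ).indicator (fun _ => (1:ℝ)) ω) *
    ({ω' | Z ω' ≤ z}.indicator (fun _ => (1:ℝ)) ω - Fc z (X ω))

/-!
Under the null hypothesis the event `A = {ε ≤ 0}` is "independent with probability `τ`" of
`(X, Z)`: the law of `(X, Z)` restricted to `A` is `τ` times the law of `(X, Z)`, since the two
agree on rectangles. Each `W_{Θ,z}` has the form `(1_A − τ)·g(X, Z)` with `g` bounded, so
`E[W] = E[1_A g] − τ E[g] = 0`, and since `(1_A − τ)² = (1 − 2τ)·1_A + τ²`, the product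
`W_{Θ₁,y} W_{Θ₂,z} = (1_A − τ)²·g₁g₂(X, Z)` has mean
`(1 − 2τ)τ E[g₁g₂] + τ² E[g₁g₂] = τ(1 − τ) E[g₁g₂]`.
-/

namespace MeasureTheory

variable {Ω α β : Type*} [MeasurableSpace Ω] [MeasurableSpace α] [MeasurableSpace β]
  {μ : Measure Ω} {A : Set Ω}

theorem map_prodMk_restrict_eq_smul_of_rectangles [IsFiniteMeasure μ] {X : Ω → α} {Z : Ω → β}
    (hX : Measurable X) (hZ : Measurable Z) (c : ENNReal)
    (h : ∀ s t, MeasurableSet s → MeasurableSet t →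
      μ (A ∩ X ⁻¹' s ∩ Z ⁻¹' t) = c * μ (X ⁻¹' s ∩ Z ⁻¹' t)) :
    (μ.restrict A).map (fun ω => (X ω, Z ω)) = c • μ.map (fun ω => (X ω, Z ω)) := by
  have hT : Measurable fun ω => (X ω, Z ω) := hX.prodMk hZ
  have hrect : ∀ s t, MeasurableSet s → MeasurableSet t →
      (μ.restrict A).map (fun ω => (X ω, Z ω)) (s ×ˢ t)
        = (c • μ.map (fun ω => (X ω, Z ω))) (s ×ˢ t) := by
    intro s t hs ht
    rw [Measure.smul_apply, Measure.map_apply hT (hs.prod ht), Measure.map_apply hT (hs.prod ht),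
      Measure.restrict_apply (hT (hs.prod ht)), smul_eq_mul, mk_preimage_prod, ← h s t hs ht,
      inter_comm, inter_assoc]
  refine ext_of_generate_finite _ generateFrom_prod.symm isPiSystem_prod ?_ ?_
  · rintro _ ⟨s, hs, t, ht, rfl⟩
    exact hrect s t hs ht
  · simpa using hrect univ univ MeasurableSet.univ MeasurableSet.univ

theorem setIntegral_comp_eq_mul_of_map_restrict_eq_smul {T : Ω → α} (hT : Measurable T)
    {c : ℝ} (hc : 0 ≤ c) (hmap : (μ.restrict A).map T = ENNReal.ofReal c • μ.map T)
    {g : α → ℝ} (hg : Measurable g) :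
    ∫ ω in A, g (T ω) ∂μ = c * ∫ ω, g (T ω) ∂μ := by
  rw [← integral_map hT.aemeasurable hg.aestronglyMeasurable, hmap, integral_smul_measure,
    integral_map hT.aemeasurable hg.aestronglyMeasurable, ENNReal.toReal_ofReal hc, smul_eq_mul]

section IndicatorMoments

variable (hA : MeasurableSet A) {c : ℝ} {ψ : Ω → ℝ} (hψ : Integrable ψ μ)
  (hAψ : ∫ ω in A, ψ ω ∂μ = c * ∫ ω, ψ ω ∂μ)
include hA hψ hAψ

theorem integral_indicator_one_sub_mul_eq_zero :
    ∫ ω, (A.indicator (fun _ => (1:ℝ)) ω - c) * ψ ω ∂μ = 0 := by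
  have hpt : ∀ ω, (A.indicator (fun _ => (1:ℝ)) ω - c) * ψ ω = A.indicator ψ ω - c * ψ ω := by
    intro ω
    by_cases hω : ω ∈ A
    · simp only [indicator_of_mem hω]; ring
    · simp only [indicator_of_notMem hω]; ring
  simp_rw [hpt]
  rw [integral_sub (hψ.indicator hA) (hψ.const_mul c), integral_indicator hA, hAψ,
    integral_const_mul, sub_self]

theorem integral_indicator_one_sub_sq_mul :
    ∫ ω, (A.indicator (fun _ => (1:ℝ)) ω - c) ^ 2 * ψ ω ∂μ = c * (1 - c) * ∫ ω, ψ ω ∂μ := by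
  have hpt : ∀ ω, (A.indicator (fun _ => (1:ℝ)) ω - c) ^ 2 * ψ ω
      = (1 - 2 * c) * A.indicator ψ ω + c ^ 2 * ψ ω := by
    intro ω
    by_cases hω : ω ∈ A
    · simp only [indicator_of_mem hω]; ring
    · simp only [indicator_of_notMem hω]; ring
  simp_rw [hpt]
  rw [integral_add ((hψ.indicator hA).const_mul _) (hψ.const_mul _), integral_const_mul,
    integral_const_mul, integral_indicator hA, hAψ]
  ring

end IndicatorMoments

section ProportionalLaw

variable (hA : MeasurableSet A) {T : Ω → α} (hT : Measurable T) {c : ℝ} (hc : 0 ≤ c)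
  (hmap : (μ.restrict A).map T = ENNReal.ofReal c • μ.map T)
  {g : α → ℝ} (hg : Measurable g) {C : ℝ} (hgC : ∀ p, |g p| ≤ C)
include hA hT hc hmap hg hgC

theorem integral_indicator_one_sub_mul_comp_eq_zero [IsFiniteMeasure μ] :
    ∫ ω, (A.indicator (fun _ => (1:ℝ)) ω - c) * g (T ω) ∂μ = 0 :=
  integral_indicator_one_sub_mul_eq_zero hA
    (.of_bound (hg.comp hT).aestronglyMeasurable C (ae_of_all _ fun ω => hgC (T ω)))
    (setIntegral_comp_eq_mul_of_map_restrict_eq_smul hT hc hmap hg)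

theorem integral_indicator_one_sub_sq_mul_comp [IsFiniteMeasure μ] :
    ∫ ω, (A.indicator (fun _ => (1:ℝ)) ω - c) ^ 2 * g (T ω) ∂μ = c * (1 - c) * ∫ ω, g (T ω) ∂μ :=
  integral_indicator_one_sub_sq_mul hA
    (.of_bound (hg.comp hT).aestronglyMeasurable C (ae_of_all _ fun ω => hgC (T ω)))
    (setIntegral_comp_eq_mul_of_map_restrict_eq_smul hT hc hmap hg)

end ProportionalLaw

end MeasureTheory

section CdfResidual

variable {d q : ℕ} {Fc : (Fin q → ℝ) → (Fin d → ℝ) → ℝ} {Θ : Set (Fin d → ℝ)} {z : Fin q → ℝ}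

/-- The factor `1{x ∈ Θ}·(1{v ≤ z} − F_{Z|X,ε}(z|x,0))` of `W_{Θ,z}`, as a function of
`p = (x, v) = (X, Z)`. -/
noncomputable def cdfResidual (Fc : (Fin q → ℝ) → (Fin d → ℝ) → ℝ) (Θ : Set (Fin d → ℝ))
    (z : Fin q → ℝ) (p : (Fin d → ℝ) × (Fin q → ℝ)) : ℝ :=
  Θ.indicator (fun _ => (1:ℝ)) p.1 * ((Iic z).indicator (fun _ => (1:ℝ)) p.2 - Fc z p.1)

theorem measurable_cdfResidual (hΘ : MeasurableSet Θ) (hFc : Measurable (Fc z)) :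
    Measurable (cdfResidual Fc Θ z) :=
  ((measurable_const.indicator hΘ).comp measurable_fst).mul
    (((measurable_const.indicator measurableSet_Iic).comp measurable_snd).sub
      (hFc.comp measurable_fst))

theorem abs_cdfResidual_le_one (hFc : ∀ x, Fc z x ∈ Icc 0 1) (p : (Fin d → ℝ) × (Fin q → ℝ)) :
    |cdfResidual Fc Θ z p| ≤ 1 := by
  obtain ⟨h0, h1⟩ := hFc p.1
  unfold cdfResidual
  by_cases hx : p.1 ∈ Θ <;> by_cases hv : p.2 ∈ Iic z <;> simp [hx, hv, abs_le] <;>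
    constructor <;> linarith

theorem cdfResidual_mul_cdfResidual (Θ₁ Θ₂ : Set (Fin d → ℝ)) (y z : Fin q → ℝ)
    (p : (Fin d → ℝ) × (Fin q → ℝ)) :
    cdfResidual Fc Θ₁ y p * cdfResidual Fc Θ₂ z p =
      (Θ₁ ∩ Θ₂).indicator (fun _ => (1:ℝ)) p.1 *
        (((Iic y).indicator (fun _ => (1:ℝ)) p.2 - Fc y p.1) *
          ((Iic z).indicator (fun _ => (1:ℝ)) p.2 - Fc z p.1)) := by
  unfold cdfResidual
  by_cases h₁ : p.1 ∈ Θ₁ <;> by_cases h₂ : p.1 ∈ Θ₂ <;> simp [h₁, h₂]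

theorem Wfun_eq_mul_cdfResidual {Ω : Type*} [MeasurableSpace Ω] (X : Ω → Fin d → ℝ)
    (Z : Ω → Fin q → ℝ) (e : Ω → ℝ) (τ : ℝ) (ω : Ω) :
    Wfun X Z e τ Fc Θ z ω =
      ({ω' | e ω' ≤ 0}.indicator (fun _ => (1:ℝ)) ω - τ) * cdfResidual Fc Θ z (X ω, Z ω) := by
  rw [Wfun, mul_assoc]
  rfl

end CdfResidual

theorem stmt15 {Ωs : Type*} [MeasurableSpace Ωs] (μ : Measure Ωs) [IsProbabilityMeasure μ]
    (d q : ℕ) (X : Ωs → Fin d → ℝ) (Z : Ωs → Fin q → ℝ) (e : Ωs → ℝ) (τ : ℝ)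
    (hτ : τ ∈ Set.Ioo (0:ℝ) 1)
    (hX : Measurable X) (hZ : Measurable Z) (he : Measurable e)
    (Fc : (Fin q → ℝ) → (Fin d → ℝ) → ℝ)
    (hFc_meas : ∀ z, Measurable (Fc z))
    (hFc_bdd : ∀ z x, Fc z x ∈ Set.Icc (0:ℝ) 1)
    -- the null hypothesis: `P(ε ≤ 0 | X, Z) = τ` almost surely
    (hnull : ∀ (Θ : Set (Fin d → ℝ)) (S : Set (Fin q → ℝ)),
      MeasurableSet Θ → MeasurableSet S →
      μ ({ω | e ω ≤ 0} ∩ X ⁻¹' Θ ∩ Z ⁻¹' S) = ENNReal.ofReal τ * μ (X ⁻¹' Θ ∩ Z ⁻¹' S))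
    (Θ Θ₁ Θ₂ : Set (Fin d → ℝ))
    (hΘ : MeasurableSet Θ) (hΘ₁ : MeasurableSet Θ₁) (hΘ₂ : MeasurableSet Θ₂)
    (y z : Fin q → ℝ) :
    (∫ ω, Wfun X Z e τ Fc Θ z ω ∂μ) = 0 ∧
      (∫ ω, Wfun X Z e τ Fc Θ₁ y ω * Wfun X Z e τ Fc Θ₂ z ω ∂μ) -
          (∫ ω, Wfun X Z e τ Fc Θ₁ y ω ∂μ) * (∫ ω, Wfun X Z e τ Fc Θ₂ z ω ∂μ) =
        τ * (1 - τ) *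
          ∫ ω, (X ⁻¹' (Θ₁ ∩ Θ₂)).indicator (fun _ => (1:ℝ)) ω *
            (({ω' | Z ω' ≤ y}.indicator (fun _ => (1:ℝ)) ω - Fc y (X ω)) *
             ({ω' | Z ω' ≤ z}.indicator (fun _ => (1:ℝ)) ω - Fc z (X ω))) ∂μ := by
  have hA : MeasurableSet {ω | e ω ≤ 0} := measurableSet_le he measurable_const
  have hmap := map_prodMk_restrict_eq_smul_of_rectangles hX hZ _ hnull
  have hmean : ∀ Θ, MeasurableSet Θ → ∀ z, ∫ ω, Wfun X Z e τ Fc Θ z ω ∂μ = 0 := by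
    intro Θ hΘ z
    simp_rw [Wfun_eq_mul_cdfResidual]
    exact integral_indicator_one_sub_mul_comp_eq_zero hA (hX.prodMk hZ) hτ.1.le hmap
      (measurable_cdfResidual hΘ (hFc_meas z)) (abs_cdfResidual_le_one (hFc_bdd z))
  refine ⟨hmean Θ hΘ z, ?_⟩
  have hprod : ∀ ω, Wfun X Z e τ Fc Θ₁ y ω * Wfun X Z e τ Fc Θ₂ z ω
      = ({ω' | e ω' ≤ 0}.indicator (fun _ => (1:ℝ)) ω - τ) ^ 2 *
          (cdfResidual Fc Θ₁ y (X ω, Z ω) * cdfResidual Fc Θ₂ z (X ω, Z ω)) := by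
    intro ω
    rw [Wfun_eq_mul_cdfResidual, Wfun_eq_mul_cdfResidual]
    ring
  have hbound : ∀ p, |cdfResidual Fc Θ₁ y p * cdfResidual Fc Θ₂ z p| ≤ 1 := fun p => by
    rw [abs_mul]
    exact mul_le_one₀ (abs_cdfResidual_le_one (hFc_bdd y) p) (abs_nonneg _)
      (abs_cdfResidual_le_one (hFc_bdd z) p)
  simp_rw [hmean Θ₁ hΘ₁ y, zero_mul, sub_zero, hprod]
  convert integral_indicator_one_sub_sq_mul_comp hA (hX.prodMk hZ) hτ.1.le hmap
    (g := fun p => cdfResidual Fc Θ₁ y p * cdfResidual Fc Θ₂ z p)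
    ((measurable_cdfResidual hΘ₁ (hFc_meas y)).mul (measurable_cdfResidual hΘ₂ (hFc_meas z)))
    hbound using 3
  exact funext fun ω => (cdfResidual_mul_cdfResidual Θ₁ Θ₂ y z (X ω, Z ω)).symm
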